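/- Let κ be an n,p-core and κ' its conjugate partition. Then skl(κ) = skl(κ'), where skl denotes the skew length with respect to (n,p). -/
import Mathlib


/-- A partition, given by its weakly decreasing sequence of parts (0-indexed,
eventually zero), identified with its Young diagram. -/
structure YPartition where
  parts : ℕ → ℕ
  antitone : ∀ ⦃i j : ℕ⦄, i ≤ j → parts j ≤ parts i
  exists_zero : ∃ N, parts N = 0

namespace YPartition

/-- The conjugate partition: `conj κ j = #{i : κ.parts i > j}` (0-indexed). -/
noncomputable def conj (κ : YPartition) (j : ℕ) : ℕ := Set.ncard {i : ℕ | j < κ.parts i}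

/-- `(i, j)` (0-indexed) is a cell of the Young diagram of `κ`. -/
def IsCell (κ : YPartition) (i j : ℕ) : Prop := j < κ.parts i

/-- The hook length of the (0-indexed) cell `(i,j)`:
in 1-indexed terms `h(i,j) = λ_i − j + λ'_j − i + 1`. -/
noncomputable def hook (κ : YPartition) (i j : ℕ) : ℕ :=
  κ.parts i + κ.conj j - i - j - 1

/-- `κ` is an `n`-core: no cell has hook length `n`. -/
def IsCore (n : ℕ) (κ : YPartition) : Prop := ∀ i j, κ.IsCell i j → κ.hook i j ≠ n

/-- The set of hook lengths of the cells in column `j` of `κ`. -/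
noncomputable def colHooks (κ : YPartition) (j : ℕ) : Set ℕ :=
  {h | ∃ i, κ.IsCell i j ∧ κ.hook i j = h}

/-- The set of hook lengths of the cells in row `i` of `κ`. -/
noncomputable def rowHooks (κ : YPartition) (i : ℕ) : Set ℕ :=
  {h | ∃ j, κ.IsCell i j ∧ κ.hook i j = h}

/-- Row `i` is an `n`-row: it is a nonempty row whose leftmost cell has hook
length `h` with `h + n` not a hook length of a cell of the first column. -/
noncomputable def IsNRow (κ : YPartition) (n i : ℕ) : Prop :=
  κ.IsCell i 0 ∧ κ.hook i 0 + n ∉ κ.colHooks 0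

/-- Column `j` is an `n`-column: it is a nonempty column whose top cell has hook
length `h` with `h + n` not a hook length of a cell of the first row. -/
noncomputable def IsNCol (κ : YPartition) (n j : ℕ) : Prop :=
  κ.IsCell 0 j ∧ κ.hook 0 j + n ∉ κ.rowHooks 0

end YPartition

namespace YPartition

variable (κ : YPartition)

lemma cell_iff (i j : ℕ) : κ.IsCell i j ↔ i < κ.conj j := by
  obtain ⟨N, hN⟩ := κ.exists_zero
  have hex : ∃ i, κ.parts i ≤ j := ⟨N, by omega⟩
  have key : ∀ i, j < κ.parts i ↔ i < Nat.find hex := by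
    intro i
    constructor
    · intro h
      by_contra hc
      push_neg at hc
      have h1 := κ.antitone hc
      have h2 := Nat.find_spec hex
      omega
    · intro h
      have := Nat.find_min hex h
      omega
  have hset : {i : ℕ | j < κ.parts i} = Set.Iio (Nat.find hex) := by
    ext i; simpa using key i
  have hconj : κ.conj j = Nat.find hex := by
    rw [conj, hset]
    rw [show Set.Iio (Nat.find hex) = ↑(Finset.range (Nat.find hex)) by ext x; simp]
    rw [Set.ncard_coe_finset]; simp
  rw [IsCell, hconj]; exact key i

lemma conj_anti ⦃j j' : ℕ⦄ (h : j ≤ j') : κ.conj j' ≤ κ.conj j := by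
  by_contra hc
  push_neg at hc
  have h1 : κ.IsCell (κ.conj j) j' := (κ.cell_iff _ _).2 hc
  have h2 : κ.IsCell (κ.conj j) j := by
    rw [IsCell] at h1 ⊢; omega
  have := (κ.cell_iff _ _).1 h2
  omega

lemma hook_key {i j : ℕ} (h : κ.IsCell i j) :
    κ.hook i j + (i + j + 1) = κ.parts i + κ.conj j ∧ j + 1 ≤ κ.parts i ∧ i + 1 ≤ κ.conj j := by
  have h1 : j < κ.parts i := h
  have h2 : i < κ.conj j := (κ.cell_iff _ _).1 h
  rw [hook]
  omega

noncomputable def beta (κ : YPartition) (i : ℕ) : ℕ := κ.hook i 0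
noncomputable def cseq (κ : YPartition) (j : ℕ) : ℕ := j + (κ.conj 0 - κ.conj j)

lemma beta_key {i : ℕ} (h : i < κ.conj 0) :
    κ.beta i + (i + 1) = κ.parts i + κ.conj 0 ∧ 1 ≤ κ.parts i := by
  have hc : κ.IsCell i 0 := (κ.cell_iff i 0).2 h
  have := κ.hook_key hc
  rw [beta]
  omega

lemma cseq_key (j : ℕ) : κ.cseq j + κ.conj j = j + κ.conj 0 ∧ κ.conj j ≤ κ.conj 0 := by
  have := κ.conj_anti (Nat.zero_le j)
  rw [cseq]
  omega

lemma beta_strictAnti {i i' : ℕ} (h : i < i') (h' : i' < κ.conj 0) : κ.beta i' < κ.beta i := by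
  have k1 := κ.beta_key (lt_trans h h')
  have k2 := κ.beta_key h'
  have := κ.antitone (le_of_lt h)
  omega

lemma cseq_strictMono {j j' : ℕ} (h : j < j') : κ.cseq j < κ.cseq j' := by
  have k1 := κ.cseq_key j
  have k2 := κ.cseq_key j'
  have := κ.conj_anti (le_of_lt h)
  omega

lemma hook_beta {i j : ℕ} (h : κ.IsCell i j) :
    κ.beta i = κ.cseq j + κ.hook i j ∧ 1 ≤ κ.hook i j := by
  have hk := κ.hook_key h
  have hi0 : i < κ.conj 0 := by
    have : κ.IsCell i 0 := by rw [IsCell] at h ⊢; omega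
    exact (κ.cell_iff i 0).1 this
  have kb := κ.beta_key hi0
  have kc := κ.cseq_key j
  omega

lemma beta_lt_cseq_of_not_cell {i j : ℕ} (hi : i < κ.conj 0) (h : ¬ κ.IsCell i j) :
    κ.beta i < κ.cseq j := by
  have h1 : κ.parts i ≤ j := by rw [IsCell] at h; omega
  have h2 : κ.conj j ≤ i := by
    by_contra hc
    exact h ((κ.cell_iff i j).2 (by omega))
  have kb := κ.beta_key hi
  have kc := κ.cseq_key j
  omega

lemma beta_ne_cseq {i j : ℕ} (hi : i < κ.conj 0) : κ.beta i ≠ κ.cseq j := by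
  by_cases h : κ.IsCell i j
  · have := κ.hook_beta h
    omega
  · have := κ.beta_lt_cseq_of_not_cell hi h
    omega

lemma cell_of_cseq_lt {i j : ℕ} (hi : i < κ.conj 0) (h : κ.cseq j < κ.beta i) :
    κ.IsCell i j := by
  by_contra hc
  have := κ.beta_lt_cseq_of_not_cell hi hc
  omega

lemma mem_colHooks {b : ℕ} : b ∈ κ.colHooks 0 ↔ ∃ i, i < κ.conj 0 ∧ κ.beta i = b := by
  rw [colHooks]
  constructor
  · rintro ⟨i, hc, hh⟩
    exact ⟨i, (κ.cell_iff i 0).1 hc, hh⟩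
  · rintro ⟨i, hi, hb⟩
    exact ⟨i, (κ.cell_iff i 0).2 hi, hb⟩

lemma cseq_notMem (j : ℕ) : κ.cseq j ∉ κ.colHooks 0 := by
  rw [mem_colHooks]
  rintro ⟨i, hi, hb⟩
  exact κ.beta_ne_cseq hi hb

lemma cseq_zero : κ.cseq 0 = 0 := by rw [cseq]; omega

lemma le_cseq (j : ℕ) : j ≤ κ.cseq j := by rw [cseq]; omega

lemma cseq_surj {c : ℕ} (h : c ∉ κ.colHooks 0) : ∃ j, κ.cseq j = c := by
  have hex : ∃ j, κ.cseq j ≤ c ∧ c < κ.cseq (j+1) := by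
    by_contra hc
    push_neg at hc
    have hall : ∀ j, κ.cseq j ≤ c := by
      intro j
      induction j with
      | zero => rw [κ.cseq_zero]; omega
      | succ k ih => exact hc k ih
    have := hall (c+1)
    have := κ.le_cseq (c+1)
    omega
  obtain ⟨j, hj1, hj2⟩ := hex
  rcases eq_or_lt_of_le hj1 with heq | hlt
  · exact ⟨j, heq⟩
  exfalso
  apply h
  -- pigeonhole: betas fill the gap (cseq j, cseq (j+1))
  set s : Finset ℕ := Finset.Ico (κ.conj (j+1)) (κ.conj j) with hs
  set t : Finset ℕ := Finset.Ioo (κ.cseq j) (κ.cseq (j+1)) with ht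
  have hf : ∀ i ∈ s, κ.beta i ∈ t := by
    intro i hi
    rw [hs, Finset.mem_Ico] at hi
    have hi0 : i < κ.conj 0 := lt_of_lt_of_le hi.2 (κ.conj_anti (Nat.zero_le j))
    have hcell : κ.IsCell i j := (κ.cell_iff i j).2 hi.2
    have h1 := κ.hook_beta hcell
    have hnc : ¬ κ.IsCell i (j+1) := by
      intro hcc
      have := (κ.cell_iff i (j+1)).1 hcc
      omega
    have h2 := κ.beta_lt_cseq_of_not_cell hi0 hnc
    rw [ht, Finset.mem_Ioo]
    omega
  have hinj : ∀ i₁ ∈ s, ∀ i₂ ∈ s, κ.beta i₁ = κ.beta i₂ → i₁ = i₂ := by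
    intro i₁ h₁ i₂ h₂ he
    rw [hs, Finset.mem_Ico] at h₁ h₂
    have hc0 : κ.conj j ≤ κ.conj 0 := κ.conj_anti (Nat.zero_le j)
    rcases lt_trichotomy i₁ i₂ with hlt' | heq' | hgt'
    · have := κ.beta_strictAnti hlt' (by omega)
      omega
    · exact heq'
    · have := κ.beta_strictAnti hgt' (by omega)
      omega
  have hcard : t.card ≤ s.card := by
    rw [hs, ht, Nat.card_Ico, Nat.card_Ioo]
    have k1 := κ.cseq_key j
    have k2 := κ.cseq_key (j+1)
    have := κ.conj_anti (show j ≤ j + 1 by omega)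
    omega
  have hsurj := Finset.surj_on_of_inj_on_of_card_le (fun i _ => κ.beta i)
    (fun i hi => hf i hi) (fun i₁ i₂ h₁ h₂ he => hinj i₁ h₁ i₂ h₂ he) hcard
  have hct : c ∈ t := by rw [ht, Finset.mem_Ioo]; omega
  obtain ⟨i, hi, hbi⟩ := hsurj c hct
  rw [hs, Finset.mem_Ico] at hi
  rw [κ.mem_colHooks]
  exact ⟨i, lt_of_lt_of_le hi.2 (κ.conj_anti (Nat.zero_le j)), hbi.symm⟩

lemma no_gap {n c : ℕ} (hcore : IsCore n κ) (hn : 1 ≤ n)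
    (hc : c ∉ κ.colHooks 0) (hb : c + n ∈ κ.colHooks 0) : False := by
  obtain ⟨i, hi, hbi⟩ := (κ.mem_colHooks).1 hb
  obtain ⟨j, hj⟩ := κ.cseq_surj hc
  have hcell : κ.IsCell i j := κ.cell_of_cseq_lt hi (by omega)
  have hhb := κ.hook_beta hcell
  exact hcore i j hcell (by omega)

lemma colHooks_bounds {b : ℕ} (hb : b ∈ κ.colHooks 0) : 1 ≤ b ∧ b ≤ κ.beta 0 := by
  obtain ⟨i, hi, hbi⟩ := (κ.mem_colHooks).1 hb
  have hc0 : κ.IsCell i 0 := (κ.cell_iff i 0).2 hi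
  have h1 := κ.hook_beta hc0
  have h2 := κ.cseq_zero
  constructor
  · have : κ.beta i = κ.hook i 0 := rfl
    omega
  · rcases Nat.eq_zero_or_pos i with h0 | h0
    · subst h0; omega
    · have := κ.beta_strictAnti h0 hi
      omega

lemma beta_zero_mem (h : 0 < κ.conj 0) : κ.beta 0 ∈ κ.colHooks 0 :=
  (κ.mem_colHooks).2 ⟨0, h, rfl⟩

lemma main_bij (n p : ℕ) :
    Set.ncard {c : ℕ × ℕ | κ.IsCell c.1 c.2 ∧ κ.IsNRow n c.1 ∧ κ.hook c.1 c.2 < p}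
    = Set.ncard {q : ℕ × ℕ | q.1 ∈ κ.colHooks 0 ∧ q.2 ∉ κ.colHooks 0 ∧ q.2 < q.1 ∧
        q.1 - q.2 < p ∧ q.1 + n ∉ κ.colHooks 0} := by
  set A := {c : ℕ × ℕ | κ.IsCell c.1 c.2 ∧ κ.IsNRow n c.1 ∧ κ.hook c.1 c.2 < p} with hA
  set S := {q : ℕ × ℕ | q.1 ∈ κ.colHooks 0 ∧ q.2 ∉ κ.colHooks 0 ∧ q.2 < q.1 ∧
        q.1 - q.2 < p ∧ q.1 + n ∉ κ.colHooks 0} with hS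
  have himg : (fun q : ℕ × ℕ => (κ.beta q.1, κ.cseq q.2)) '' A = S := by
    apply Set.eq_of_subset_of_subset
    · rintro ⟨b, c⟩ ⟨⟨i, j⟩, hmem, heq⟩
      obtain ⟨hcell, hrow, hhp⟩ := hmem
      dsimp only at hcell hrow hhp heq
      simp only [Prod.mk.injEq] at heq
      obtain ⟨hb, hc⟩ := heq
      have hi0 : i < κ.conj 0 := (κ.cell_iff i 0).1 hrow.1
      have hhb := κ.hook_beta hcell
      subst hb hc
      refine ⟨(κ.mem_colHooks).2 ⟨i, hi0, rfl⟩, κ.cseq_notMem j, by omega, by omega, hrow.2⟩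
    · rintro ⟨b, c⟩ ⟨hbB, hcB, hcb, hbcp, hbn⟩
      obtain ⟨i, hi, hbi⟩ := (κ.mem_colHooks).1 hbB
      obtain ⟨j, hj⟩ := κ.cseq_surj hcB
      have hcell : κ.IsCell i j := κ.cell_of_cseq_lt hi (by omega)
      have hhb := κ.hook_beta hcell
      refine ⟨(i, j), ⟨hcell, ⟨(κ.cell_iff i 0).2 hi, ?_⟩,
          show κ.hook i j < p by omega⟩, by
        show (κ.beta i, κ.cseq j) = (b, c)
        simp only [Prod.mk.injEq]; exact ⟨hbi, hj⟩⟩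
      show κ.hook i 0 + n ∉ κ.colHooks 0
      have : κ.hook i 0 = κ.beta i := rfl
      rw [this, hbi]
      exact hbn
  have hinj : Set.InjOn (fun q : ℕ × ℕ => (κ.beta q.1, κ.cseq q.2)) A := by
    rintro ⟨i, j⟩ hij ⟨i', j'⟩ hij' heq
    dsimp only at heq
    simp only [Prod.mk.injEq] at heq ⊢
    obtain ⟨hbe, hce⟩ := heq
    have hi0 : i < κ.conj 0 := (κ.cell_iff i 0).1 hij.2.1.1
    have hi0' : i' < κ.conj 0 := (κ.cell_iff i' 0).1 hij'.2.1.1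
    constructor
    · rcases lt_trichotomy i i' with h | h | h
      · have := κ.beta_strictAnti h hi0'; omega
      · exact h
      · have := κ.beta_strictAnti h hi0; omega
    · rcases lt_trichotomy j j' with h | h | h
      · have := κ.cseq_strictMono h; omega
      · exact h
      · have := κ.cseq_strictMono h; omega
  rw [← himg, Set.ncard_image_of_injOn hinj]

lemma conj_zero_conj (κ' : YPartition) (hcj : ∀ j, κ'.parts j = κ.conj j) :
    κ'.conj 0 = κ.parts 0 := by
  have hset : {i : ℕ | 0 < κ'.parts i} = Set.Iio (κ.parts 0) := by
    ext i
    simp only [Set.mem_setOf_eq, Set.mem_Iio, hcj]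
    constructor
    · intro h
      exact ((κ.cell_iff 0 i).2 h : κ.IsCell 0 i)
    · intro h
      exact (κ.cell_iff 0 i).1 (h : κ.IsCell 0 i)
  rw [conj, hset]
  rw [show Set.Iio (κ.parts 0) = ↑(Finset.range (κ.parts 0)) by ext x; simp]
  rw [Set.ncard_coe_finset]; simp

lemma hook_conj_col (κ' : YPartition) (hcj : ∀ j, κ'.parts j = κ.conj j) (j : ℕ) :
    κ'.hook j 0 = κ.hook 0 j := by
  rw [hook, hook, hcj, κ.conj_zero_conj κ' hcj]
  omega

lemma colHooks_conj_iff (κ' : YPartition) (hcj : ∀ j, κ'.parts j = κ.conj j)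
    (h0 : 0 < κ.parts 0) (b : ℕ) :
    b ∈ κ'.colHooks 0 ↔ 1 ≤ b ∧ b ≤ κ.beta 0 ∧ κ.beta 0 - b ∉ κ.colHooks 0 := by
  have hc00 : 0 < κ.conj 0 := (κ.cell_iff 0 0).1 (h0 : κ.IsCell 0 0)
  constructor
  · rintro ⟨j, hcell', hh'⟩
    have hcell : κ.IsCell 0 j := by
      have : 0 < κ'.parts j := hcell'
      rw [hcj] at this
      exact (κ.cell_iff 0 j).2 this
    rw [κ.hook_conj_col κ' hcj] at hh'
    have hhb := κ.hook_beta hcell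
    refine ⟨by omega, by omega, ?_⟩
    have : κ.beta 0 - b = κ.cseq j := by omega
    rw [this]
    exact κ.cseq_notMem j
  · rintro ⟨hb1, hb2, hbB⟩
    obtain ⟨j, hj⟩ := κ.cseq_surj hbB
    have hcell : κ.IsCell 0 j := κ.cell_of_cseq_lt hc00 (by omega)
    have hhb := κ.hook_beta hcell
    refine ⟨j, ?_, ?_⟩
    · show 0 < κ'.parts j
      rw [hcj]
      exact (κ.cell_iff 0 j).1 hcell
    · rw [κ.hook_conj_col κ' hcj]
      omega

end YPartition

/-- For an `n,p`-core `κ` with conjugate `κ'`, the skew length of `κ`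
(with respect to `(n,p)`) equals the skew length of `κ'`. -/
theorem stmt6 (n p : ℕ) (hn : 1 ≤ n) (hp : 1 ≤ p) (κ κ' : YPartition)
    (hconj : ∀ j, κ'.parts j = κ.conj j)
    (hκn : YPartition.IsCore n κ) (hκp : YPartition.IsCore p κ) :
    Set.ncard {c : ℕ × ℕ | κ.IsCell c.1 c.2 ∧ κ.IsNRow n c.1 ∧ κ.hook c.1 c.2 < p}
      = Set.ncard {c : ℕ × ℕ | κ'.IsCell c.1 c.2 ∧ κ'.IsNRow n c.1 ∧ κ'.hook c.1 c.2 < p} := by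
  rcases Nat.eq_zero_or_pos (κ.parts 0) with hz | h0
  · -- empty partition: both sides are empty
    have hA : {c : ℕ × ℕ | κ.IsCell c.1 c.2 ∧ κ.IsNRow n c.1 ∧ κ.hook c.1 c.2 < p} = ∅ := by
      ext q
      simp only [Set.mem_setOf_eq, Set.mem_empty_iff_false, iff_false]
      rintro ⟨hcell, -, -⟩
      have h1 : q.2 < κ.parts q.1 := hcell
      have h2 := κ.antitone (Nat.zero_le q.1)
      omega
    have hconj0 : ∀ i, κ.conj i = 0 := by
      intro i
      by_contra hc
      have : κ.IsCell 0 i := (κ.cell_iff 0 i).2 (by omega)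
      have : i < κ.parts 0 := this
      omega
    have hA' : {c : ℕ × ℕ | κ'.IsCell c.1 c.2 ∧ κ'.IsNRow n c.1 ∧ κ'.hook c.1 c.2 < p} = ∅ := by
      ext q
      simp only [Set.mem_setOf_eq, Set.mem_empty_iff_false, iff_false]
      rintro ⟨hcell, -, -⟩
      have h1 : q.2 < κ'.parts q.1 := hcell
      rw [hconj, hconj0] at h1
      omega
    rw [hA, hA']
  · -- main case
    have hc00 : 0 < κ.conj 0 := (κ.cell_iff 0 0).1 (h0 : κ.IsCell 0 0)
    set M := κ.beta 0 with hM
    set B := κ.colHooks 0 with hB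
    have hMB : M ∈ B := κ.beta_zero_mem hc00
    have h0B : (0 : ℕ) ∉ B := fun h => by have := κ.colHooks_bounds h; omega
    have hbnd : ∀ b ∈ B, 1 ≤ b ∧ b ≤ M := fun b hb => κ.colHooks_bounds hb
    have hB' : ∀ b, b ∈ κ'.colHooks 0 ↔ 1 ≤ b ∧ b ≤ M ∧ M - b ∉ B :=
      κ.colHooks_conj_iff κ' hconj h0
    rw [κ.main_bij n p, κ'.main_bij n p]
    set S := {q : ℕ × ℕ | q.1 ∈ κ.colHooks 0 ∧ q.2 ∉ κ.colHooks 0 ∧ q.2 < q.1 ∧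
        q.1 - q.2 < p ∧ q.1 + n ∉ κ.colHooks 0} with hSdef
    set S' := {q : ℕ × ℕ | q.1 ∈ κ'.colHooks 0 ∧ q.2 ∉ κ'.colHooks 0 ∧ q.2 < q.1 ∧
        q.1 - q.2 < p ∧ q.1 + n ∉ κ'.colHooks 0} with hS'def
    set T := {q : ℕ × ℕ | q.1 ∈ B ∧ q.2 ∉ B ∧ q.2 < q.1 ∧ q.1 - q.2 < p ∧
        (q.2 < n ∨ (n ≤ q.2 ∧ q.2 - n ∈ B))} with hTdef
    set U := {q : ℕ × ℕ | q.1 ∈ B ∧ q.2 ∉ B ∧ q.2 < q.1 ∧ q.1 - q.2 < p} with hUdef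
    -- Step A : |S'| = |T|
    have stepA : S'.ncard = T.ncard := by
      have himg : (fun q : ℕ × ℕ => (M - q.2, M - q.1)) '' S' = T := by
        apply Set.eq_of_subset_of_subset
        · rintro x ⟨q, hq, hGq⟩
          obtain ⟨hb', hc', hlt, hdp, hbn⟩ := hq
          rw [hB'] at hb'
          have hc'M : q.2 < M := by omega
          have hMc'B : M - q.2 ∈ B := by
            rcases Nat.eq_zero_or_pos q.2 with h | h
            · rw [h]; simpa using hMB
            · by_contra hcon
              exact hc' ((hB' q.2).2 ⟨h, by omega, hcon⟩)
          have hbnB : q.1 + n > M ∨ M - (q.1 + n) ∈ B := by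
            by_contra hcon
            push_neg at hcon
            exact hbn ((hB' (q.1 + n)).2 ⟨by omega, by omega, hcon.2⟩)
          subst hGq
          show (M - q.2, M - q.1) ∈ T
          refine ⟨show M - q.2 ∈ B from hMc'B, show M - q.1 ∉ B from hb'.2.2,
            show M - q.1 < M - q.2 by omega, show M - q.2 - (M - q.1) < p by omega, ?_⟩
          show M - q.1 < n ∨ (n ≤ M - q.1 ∧ M - q.1 - n ∈ B)
          rcases hbnB with h | h
          · left; omega
          · rcases Nat.lt_or_ge (M - q.1) n with hlt2 | hge
            · left; exact hlt2
            · right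
              refine ⟨hge, ?_⟩
              have : M - q.1 - n = M - (q.1 + n) := by omega
              rw [this]; exact h
        · intro q hq
          obtain ⟨hb, hc, hlt, hdp, hcond⟩ := hq
          have hbM := hbnd _ hb
          refine ⟨(M - q.2, M - q.1), ⟨?_, ?_, show M - q.1 < M - q.2 by omega,
            show M - q.2 - (M - q.1) < p by omega, ?_⟩, ?_⟩
          · rw [hB']
            refine ⟨by omega, by omega, ?_⟩
            have : M - (M - q.2) = q.2 := by omega
            rw [this]; exact hc
          · rw [hB']
            push_neg
            intro h1 h2
            have : M - (M - q.1) = q.1 := by omega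
            rw [this]; exact hb
          · rw [hB']
            push_neg
            intro h1 h2
            rcases hcond with h | ⟨hnle, hcnB⟩
            · omega
            · have : M - (M - q.2 + n) = q.2 - n := by omega
              rw [this]; exact hcnB
          · have e1 : M - (M - q.1) = q.1 := by omega
            have e2 : M - (M - q.2) = q.2 := by omega
            show (M - (M - q.1), M - (M - q.2)) = q
            rw [e1, e2]
      have hinj : Set.InjOn (fun q : ℕ × ℕ => (M - q.2, M - q.1)) S' := by
        intro q hq q2 hq2 he
        obtain ⟨hb', hc', hlt, -, -⟩ := hq
        obtain ⟨hb2', hc2', hlt2, -, -⟩ := hq2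
        rw [hB'] at hb' hb2'
        simp only [Prod.mk.injEq] at he
        have : q.1 = q2.1 ∧ q.2 = q2.2 := by omega
        exact Prod.ext this.1 this.2
      rw [← himg, Set.ncard_image_of_injOn hinj]
    -- Step B : |S| = |T| via complements in U
    have hUfin : U.Finite := by
      apply Set.Finite.subset ((Set.finite_Iio (M + 1)).prod (Set.finite_Iio (M + 1)))
      intro q hq
      obtain ⟨hb, -, hlt, -⟩ := hq
      have := hbnd _ hb
      exact ⟨by simp; omega, by simp; omega⟩
    have hSU : S ⊆ U := fun q hq => ⟨hq.1, hq.2.1, hq.2.2.1, hq.2.2.2.1⟩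
    have hTU : T ⊆ U := fun q hq => ⟨hq.1, hq.2.1, hq.2.2.1, hq.2.2.2.1⟩
    have stepB : S.ncard = T.ncard := by
      have himg : (fun q : ℕ × ℕ => (q.1 + n, q.2 + n)) '' (U \ S) = U \ T := by
        apply Set.eq_of_subset_of_subset
        · rintro x ⟨q, ⟨hqU, hqS⟩, hGq⟩
          obtain ⟨hb, hc, hlt, hdp⟩ := hqU
          have hbn : q.1 + n ∈ B := by
            by_contra hcon
            exact hqS ⟨hb, hc, hlt, hdp, hcon⟩
          have hcn : q.2 + n ∉ B := fun h => κ.no_gap hκn hn hc h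
          subst hGq
          show (q.1 + n, q.2 + n) ∈ U \ T
          constructor
          · exact ⟨hbn, hcn, show q.2 + n < q.1 + n by omega,
              show q.1 + n - (q.2 + n) < p by omega⟩
          · intro hT
            have hcnd : q.2 + n < n ∨ (n ≤ q.2 + n ∧ q.2 + n - n ∈ B) := hT.2.2.2.2
            rcases hcnd with h | ⟨-, h⟩
            · omega
            · have : q.2 + n - n = q.2 := by omega
              rw [this] at h
              exact hc h
        · rintro q ⟨hqU, hqT⟩
          obtain ⟨hb, hc, hlt, hdp⟩ := hqU
          have hcond : n ≤ q.2 ∧ q.2 - n ∉ B := by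
            by_contra hcon
            apply hqT
            refine ⟨hb, hc, hlt, hdp, ?_⟩
            rcases Nat.lt_or_ge q.2 n with h | h
            · left; exact h
            · right; exact ⟨h, by tauto⟩
          have hbnB : q.1 - n ∈ B := by
            by_contra hcon
            exact κ.no_gap hκn hn hcon (by rw [show q.1 - n + n = q.1 by omega]; exact hb)
          refine ⟨(q.1 - n, q.2 - n), ⟨⟨hbnB, hcond.2, show q.2 - n < q.1 - n by omega,
            show q.1 - n - (q.2 - n) < p by omega⟩, ?_⟩, ?_⟩
          · intro hS
            have hlast : q.1 - n + n ∉ κ.colHooks 0 := hS.2.2.2.2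
            apply hlast
            rw [show q.1 - n + n = q.1 by omega]
            exact hb
          · have e1 : q.1 - n + n = q.1 := by omega
            have e2 : q.2 - n + n = q.2 := by omega
            show (q.1 - n + n, q.2 - n + n) = q
            rw [e1, e2]
      have hinj : Set.InjOn (fun q : ℕ × ℕ => (q.1 + n, q.2 + n)) (U \ S) := by
        intro q hq q2 hq2 he
        simp only [Prod.mk.injEq] at he
        exact Prod.ext (by omega) (by omega)
      have hdiff : (U \ S).ncard = (U \ T).ncard := by
        rw [← himg, Set.ncard_image_of_injOn hinj]
      have d1 := Set.ncard_diff hSU (hUfin.subset hSU)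
      have d2 := Set.ncard_diff hTU (hUfin.subset hTU)
      have l1 := Set.ncard_le_ncard hSU hUfin
      have l2 := Set.ncard_le_ncard hTU hUfin
      omega
    rw [stepB, ← stepA]
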